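/- For i ∈ I, α ∈ Φ, u ∈ R and t ∈ R^× one has h_i(t) x_α(u) h_i(t)^{−1} = x_α(u t^{(α, α_i^∨)}). Consequently U⁺ and U⁻ are normalised by H, so B^± := U^±·H are subgroups of G, and B⁺ ∩ B⁻ = H, B^± ∩ N = H. -/

import Mathlib

noncomputable section

open scoped BigOperators

/-- `pr B x y` is the pairing `(x, y^∨) = 2(x,y)/(y,y)`. -/
def pr {E : Type} [AddCommGroup E] [Module ℚ E] (B : E →ₗ[ℚ] E →ₗ[ℚ] ℚ) (x y : E) : ℚ :=
  2 * B x y / B y y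

/-- A reduced irreducible crystallographic root system `Φ` in a finite-dimensional ℚ-vector
space `E` equipped with a positive definite symmetric bilinear form, together with a system of
simple roots `α i` (`i ∈ I`). -/
structure RootSystemCtx (E I : Type) [AddCommGroup E] [Module ℚ E] [Fintype I] : Type where
  B : E →ₗ[ℚ] E →ₗ[ℚ] ℚ
  Bsymm : ∀ x y, B x y = B y x
  Bpos : ∀ x, x ≠ 0 → 0 < B x x
  findim : FiniteDimensional ℚ E
  Φ : Set E
  Φfin : Φ.Finite
  zero_nmem : (0 : E) ∉ Φ
  reduced : ∀ a ∈ Φ, ∀ b ∈ Φ, b ≠ a → b ≠ -a → LinearIndependent ℚ ![a, b]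
  crystal : ∀ a ∈ Φ, ∀ b ∈ Φ, ∃ n : ℤ, pr B b a = (n : ℚ)
  reflect_mem : ∀ a ∈ Φ, ∀ b ∈ Φ, b - pr B b a • a ∈ Φ
  α : I → E
  α_mem : ∀ i, α i ∈ Φ
  α_indep : LinearIndependent ℚ α
  α_span : Submodule.span ℚ (Set.range α) = ⊤
  pos_neg : ∀ b ∈ Φ, (∃ cf : I → ℤ, (∀ i, 0 ≤ cf i) ∧ b = ∑ i, (cf i : ℚ) • α i) ∨
      (∃ cf : I → ℤ, (∀ i, cf i ≤ 0) ∧ b = ∑ i, (cf i : ℚ) • α i)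
  irred : ¬ ∃ Φ₁ Φ₂ : Set E, Φ₁.Nonempty ∧ Φ₂.Nonempty ∧ Φ₁ ∪ Φ₂ = Φ ∧
      ∀ a ∈ Φ₁, ∀ b ∈ Φ₂, B a b = 0

namespace RootSystemCtx

variable {E I : Type} [AddCommGroup E] [Module ℚ E] [Fintype I] (c : RootSystemCtx E I)

/-- The linear functional `(·, a^∨)`. -/
def coform (a : E) : Module.Dual ℚ E := (2 * (c.B a a)⁻¹) • (c.B.flip a)

lemma coform_apply (a x : E) : c.coform a x = pr c.B x a := by
  simp only [coform, LinearMap.smul_apply, LinearMap.flip_apply, smul_eq_mul, pr,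
    div_eq_mul_inv]
  ring

lemma coform_self {a : E} (ha : a ∈ c.Φ) : c.coform a a = 2 := by
  have h0 : a ≠ 0 := fun h => c.zero_nmem (h ▸ ha)
  have hB : c.B a a ≠ 0 := ne_of_gt (c.Bpos a h0)
  rw [coform_apply, pr]
  field_simp

/-- The simple reflection `s i : v ↦ v - (v, αᵢ^∨) αᵢ`. -/
def s (i : I) : E ≃ₗ[ℚ] E := Module.reflection (c.coform_self (c.α_mem i))

lemma s_apply (i : I) (v : E) : c.s i v = v - pr c.B v (c.α i) • c.α i := by
  rw [s, Module.reflection_apply, coform_apply]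

/-- The Weyl group, as a subgroup of the group of linear automorphisms of `E`. -/
def Weyl : Subgroup (E ≃ₗ[ℚ] E) := Subgroup.closure (Set.range c.s)

/-- `lam` is a minuscule (dominant) weight: a nonzero dominant weight (integral pairing
with every simple coroot) with `(lam, a^∨) ∈ {0, ±1}` for every root `a`. -/
def IsMinuscule (lam : E) : Prop :=
  lam ≠ 0 ∧ (∀ i, ∃ n : ℤ, pr c.B lam (c.α i) = (n : ℚ)) ∧ (∀ i, 0 ≤ pr c.B lam (c.α i)) ∧
    ∀ a ∈ c.Φ, pr c.B lam a = 0 ∨ pr c.B lam a = 1 ∨ pr c.B lam a = -1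

/-- `b` is a positive root. -/
def IsPos (b : E) : Prop :=
  b ∈ c.Φ ∧ ∃ cf : I → ℚ, (∀ i, 0 ≤ cf i) ∧ b = ∑ i, cf i • c.α i

end RootSystemCtx

/-- A nonempty union `Ψ` of Weyl group orbits of minuscule weights. -/
structure PsiData {E I : Type} [AddCommGroup E] [Module ℚ E] [Fintype I]
    (c : RootSystemCtx E I) : Type where
  Ψ : Set E
  nonempty : Ψ.Nonempty
  finite : Ψ.Finite
  orbit : ∀ μ ∈ Ψ, ∃ lam, c.IsMinuscule lam ∧ ∃ w ∈ c.Weyl, w lam = μ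
  stab : ∀ μ ∈ Ψ, ∀ w ∈ c.Weyl, w μ ∈ Ψ

/-- `nOp e f i t tinv` is the operator `(1 + t eᵢ)(1 - t⁻¹ fᵢ)(1 + t eᵢ)`, where `tinv`
is the inverse of `t`. -/
def nOp {I K M' : Type} [CommRing K] [AddCommGroup M'] [Module K M']
    (e f : I → Module.End K M') (i : I) (t tinv : K) : Module.End K M' :=
  (1 + t • e i) * (1 - tinv • f i) * (1 + t • e i)

/-- `hOp e f i t` is the operator `hᵢ(t) = nᵢ(t) nᵢ(-1)` for a unit `t`. -/
def hOp {I K M' : Type} [CommRing K] [AddCommGroup M'] [Module K M']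
    (e f : I → Module.End K M') (i : I) (t : Kˣ) : Module.End K M' :=
  nOp e f i (t : K) ((t⁻¹ : Kˣ) : K) * nOp e f i ((-1 : Kˣ) : K) (((-1 : Kˣ)⁻¹ : Kˣ) : K)

/-- Conjugation `n_{i₁} ⋯ n_{i_k} x n_{i_k}⁻¹ ⋯ n_{i₁}⁻¹` for a list `l = [i₁, …, i_k]`. -/
def conjOp {I M' : Type} [AddCommGroup M'] [Module ℂ M'] (nu : I → (Module.End ℂ M')ˣ)
    (x : Module.End ℂ M') (l : List I) : Module.End ℂ M' :=
  ↑((l.map nu).prod) * x * ↑(((l.map nu).prod)⁻¹)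

attribute [local instance] LieRing.ofAssociativeRing

/-- The Lie subalgebra of `𝔤𝔩(M)` generated by the `eᵢ` and `fᵢ`. -/
def genLie {I M' : Type} [AddCommGroup M'] [Module ℂ M'] (e f : I → Module.End ℂ M') :
    LieSubalgebra ℂ (Module.End ℂ M') :=
  LieSubalgebra.lieSpan ℂ (Module.End ℂ M') (Set.range e ∪ Set.range f)

/-- The root space `𝔤_a = {x ∈ 𝔤 ∣ [hⱼ, x] = (a, αⱼ^∨) x for all j}`, as a set. -/
def rootSet {E I M' : Type} [AddCommGroup E] [Module ℚ E] [Fintype I]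
    [AddCommGroup M'] [Module ℂ M'] (c : RootSystemCtx E I)
    (e f h : I → Module.End ℂ M') (a : E) : Set (Module.End ℂ M') :=
  {x | x ∈ genLie e f ∧ ∀ j, ⁅h j, x⁆ = ((pr c.B a (c.α j) : ℚ) : ℂ) • x}

/-- The root space `𝔤_a`, as a submodule of `𝔤𝔩(M)`. -/
def rootSp {E I M' : Type} [AddCommGroup E] [Module ℚ E] [Fintype I]
    [AddCommGroup M'] [Module ℂ M'] (c : RootSystemCtx E I)
    (e f h : I → Module.End ℂ M') (a : E) : Submodule ℂ (Module.End ℂ M') :=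
  (genLie e f).toSubmodule ⊓ ⨅ j : I,
    Module.End.eigenspace
      (LinearMap.mulLeft ℂ (h j) - LinearMap.mulRight ℂ (h j) : Module.End ℂ (Module.End ℂ M'))
      ((pr c.B a (c.α j) : ℚ) : ℂ)

/-- The diagonal subgroup `H` generated by all `hᵢ(t)`, `t ∈ Kˣ`. -/
def Hgroup {I K M' : Type} [CommRing K] [AddCommGroup M'] [Module K M']
    (e f : I → Module.End K M') : Subgroup (Module.End K M')ˣ :=
  Subgroup.closure {g | ∃ (i : I) (t : Kˣ), (g : Module.End K M') = hOp e f i t}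

/-- The monomial subgroup `N` generated by all `nᵢ(t)`, `t ∈ Kˣ`. -/
def Ngroup {I K M' : Type} [CommRing K] [AddCommGroup M'] [Module K M']
    (e f : I → Module.End K M') : Subgroup (Module.End K M')ˣ :=
  Subgroup.closure {g | ∃ (i : I) (t : Kˣ),
    (g : Module.End K M') = nOp e f i (t : K) ((t⁻¹ : Kˣ) : K)}

/-- The subgroup `U⁺` generated by all `x_γ(t) = 1 + t ē_γ` with `γ ∈ Φ⁺`. -/
def Uplus {E I K M' : Type} [AddCommGroup E] [Module ℚ E] [Fintype I]
    [CommRing K] [AddCommGroup M'] [Module K M'] (c : RootSystemCtx E I)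
    (eb : E → Module.End K M') : Subgroup (Module.End K M')ˣ :=
  Subgroup.closure {g | ∃ γ, c.IsPos γ ∧ ∃ t : K, (g : Module.End K M') = 1 + t • eb γ}

/-- The subgroup `U⁻` generated by all `x_γ(t) = 1 + t ē_γ` with `γ ∈ Φ⁻`. -/
def Uminus {E I K M' : Type} [AddCommGroup E] [Module ℚ E] [Fintype I]
    [CommRing K] [AddCommGroup M'] [Module K M'] (c : RootSystemCtx E I)
    (eb : E → Module.End K M') : Subgroup (Module.End K M')ˣ :=
  Subgroup.closure {g | ∃ γ, c.IsPos (-γ) ∧ ∃ t : K, (g : Module.End K M') = 1 + t • eb γ}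

/-- The subgroup `Uᵢ⁺` generated by all `x_γ(t)` with `γ ∈ Φ⁺`, `γ ≠ αᵢ`. -/
def UplusI {E I K M' : Type} [AddCommGroup E] [Module ℚ E] [Fintype I]
    [CommRing K] [AddCommGroup M'] [Module K M'] (c : RootSystemCtx E I)
    (eb : E → Module.End K M') (i : I) : Subgroup (Module.End K M')ˣ :=
  Subgroup.closure {g | ∃ γ, c.IsPos γ ∧ γ ≠ c.α i ∧ ∃ t : K, (g : Module.End K M') = 1 + t • eb γ}

/-!
Everything is read off the action on the weight basis `z̄_μ`, `μ ∈ Ψ`, where every weight has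
pairing `0` or `±1` with every coroot. Each `ē_γ` raises weights by `γ`: this holds for `eᵢ`,
is preserved by conjugation with `nᵢ` (which maps the weight-`μ` line to the weight-`sᵢμ` line),
and descends from `ℂ` to `R` because the matrix entries are integers. As `μ + 2γ` has pairing at
least `3` with `γ^∨`, also `ē_γ² = 0`. The element `hᵢ(t)` acts on the weight-`μ` line by
`t^{(μ, αᵢ^∨)}`, which gives the conjugation formula, so `H` normalises `U^±` and `B^± = U^± H`.
Ordering weights by height, `U⁺` consists of unitriangular, `U⁻` of lower unitriangular, `H` of
diagonal and `N` of monomial operators. An operator that is unitriangular and also either lower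
unitriangular times diagonal, or monomial, is the identity; this gives the intersections.
-/

lemma one_add_smul_mul_one_add_neg_smul {K A : Type*} [CommRing K] [Ring A] [Algebra K A]
    {a : A} (ha : a * a = 0) (r : K) : (1 + r • a) * (1 + (-r) • a) = 1 := by
  have hsq : (r • a) * ((-r) • a) = 0 := by rw [smul_mul_smul_comm, ha, smul_zero]
  rw [mul_add, add_mul, add_mul, hsq, neg_smul]
  noncomm_ring

lemma nOp_mul_nOp_neg_of_mul_self_eq_zero {I K V : Type} [CommRing K] [AddCommGroup V]
    [Module K V] {e f : I → Module.End K V} {i : I} (he : e i * e i = 0) (hf : f i * f i = 0)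
    (t s : K) :
    nOp e f i t s * nOp e f i (-t) (-s) = 1 := by
  have ke := one_add_smul_mul_one_add_neg_smul he t
  have kf := one_add_smul_mul_one_add_neg_smul hf (-s)
  simp only [neg_neg, ← sub_eq_add_neg, neg_smul] at kf
  simp only [nOp, neg_smul, sub_neg_eq_add, ← sub_eq_add_neg] at ke ⊢
  calc (1 + t • e i) * (1 - s • f i) * (1 + t • e i) *
        ((1 - t • e i) * (1 + s • f i) * (1 - t • e i))
      = (1 + t • e i) * ((1 - s • f i) * ((1 + t • e i) * (1 - t • e i)) * (1 + s • f i))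
        * (1 - t • e i) := by noncomm_ring
    _ = 1 := by rw [ke, mul_one, kf, mul_one, ke]

lemma Subgroup.closure_le_normalizer_closure {G : Type*} [Group G] {S T : Set G}
    (hT : ∀ g ∈ T, g⁻¹ ∈ T) (hST : ∀ g ∈ T, ∀ v ∈ S, g * v * g⁻¹ ∈ S) :
    Subgroup.closure T ≤ Subgroup.normalizer (Subgroup.closure S : Set G) := by
  refine (Subgroup.closure_le _).2 fun g hg => ?_
  rw [SetLike.mem_coe, Subgroup.mem_normalizer_iff_map_conj_eq, MonoidHom.map_closure]
  congr 1
  ext v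
  constructor
  · rintro ⟨w, hw, rfl⟩
    exact hST g hg w hw
  · intro hv
    exact ⟨g⁻¹ * v * g⁻¹⁻¹, hST _ (hT g hg) v hv, by simp [MulAut.conj_apply, mul_assoc]⟩

lemma Subgroup.exists_mul_of_mem_sup {G : Type*} [Group G] {U H : Subgroup G}
    (hle : H ≤ Subgroup.normalizer (U : Set G)) {g : G} (hg : g ∈ U ⊔ H) :
    ∃ u ∈ U, ∃ x ∈ H, g = u * x := by
  rw [← SetLike.mem_coe, Subgroup.coe_mul_of_right_le_normalizer_left U H hle] at hg
  obtain ⟨u, hu, x, hx, rfl⟩ := hg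
  exact ⟨u, hu, x, hx, rfl⟩

section WeightSpace

variable {ι K V W : Type} [CommRing K] [AddCommGroup V] [Module K V]
  (b : Module.Basis ι K V) (wt : ι → W)

def weightSpace (ω : W) : Submodule K V := Submodule.span K (b '' {i | wt i = ω})

def MapsWeights (σ : W → W) (x : Module.End K V) : Prop :=
  ∀ ω, ∀ v ∈ weightSpace b wt ω, x v ∈ weightSpace b wt (σ ω)

variable {b wt}

lemma basis_mem_weightSpace (i : ι) : b i ∈ weightSpace b wt (wt i) :=
  Submodule.subset_span ⟨i, rfl, rfl⟩

lemma basis_mem_weightSpace_val {Ψ : Set W} {b : Module.Basis Ψ K V} {ω : W} (hω : ω ∈ Ψ) :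
    b ⟨ω, hω⟩ ∈ weightSpace b Subtype.val ω :=
  basis_mem_weightSpace (wt := Subtype.val) ⟨ω, hω⟩

lemma repr_eq_zero_of_mem_weightSpace {ω : W} {v : V} (hv : v ∈ weightSpace b wt ω) {j : ι}
    (hj : wt j ≠ ω) : b.repr v j = 0 :=
  Finsupp.notMem_support_iff.1 fun hmem => hj (b.mem_span_image.1 hv hmem)

lemma mem_weightSpace_of_repr {ω : W} {v : V} (hv : ∀ j, wt j ≠ ω → b.repr v j = 0) :
    v ∈ weightSpace b wt ω :=
  b.mem_span_image.2 fun j hj => by_contra fun hne => Finsupp.mem_support_iff.1 hj (hv j hne)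

lemma weightSpace_eq_bot {ω : W} (hω : ∀ i, wt i ≠ ω) : weightSpace b wt ω = ⊥ := by
  rw [weightSpace, Submodule.span_eq_bot]
  rintro _ ⟨i, hi, rfl⟩
  exact absurd hi (hω i)

lemma mapsWeights_of_basis {σ : W → W} {x : Module.End K V}
    (hx : ∀ i, x (b i) ∈ weightSpace b wt (σ (wt i))) : MapsWeights b wt σ x := by
  intro ω v hv
  refine (Submodule.span_le (p := (weightSpace b wt (σ ω)).comap x)).2 ?_ hv
  rintro _ ⟨i, rfl, rfl⟩
  exact hx i

lemma MapsWeights.apply_basis {σ : W → W} {x : Module.End K V} (hx : MapsWeights b wt σ x)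
    (i : ι) : x (b i) ∈ weightSpace b wt (σ (wt i)) :=
  hx _ _ (basis_mem_weightSpace i)

lemma MapsWeights.mul {σ τ : W → W} {x y : Module.End K V} (hx : MapsWeights b wt σ x)
    (hy : MapsWeights b wt τ y) : MapsWeights b wt (σ ∘ τ) (x * y) :=
  fun ω _ hv => hx _ _ (hy ω _ hv)

lemma mapsWeights_of_repr_eq_intCast {K' V' : Type} [CommRing K'] [CharZero K']
    [AddCommGroup V'] [Module K' V'] {b' : Module.Basis ι K' V'} {σ : W → W}
    {x : Module.End K V} {x' : Module.End K' V'} (hx' : MapsWeights b' wt σ x')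
    (hint : ∀ i j, ∃ k : ℤ, b'.repr (x' (b' i)) j = k ∧ b.repr (x (b i)) j = k) :
    MapsWeights b wt σ x := by
  refine mapsWeights_of_basis fun i => mem_weightSpace_of_repr fun j hj => ?_
  obtain ⟨k, hk', hk⟩ := hint i j
  have hk0 : (k : K') = 0 := hk' ▸ repr_eq_zero_of_mem_weightSpace (hx'.apply_basis i) hj
  rw [hk, Int.cast_eq_zero.1 hk0, Int.cast_zero]

end WeightSpace

namespace Module.Basis

variable {ι R V α : Type} [CommRing R] [AddCommGroup V] [Module R V] (b : Module.Basis ι R V)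

def IsUnitriangular [Preorder α] (φ : ι → α) (x : Module.End R V) : Prop :=
  ∀ i, x (b i) - b i ∈ Submodule.span R (b '' {j | φ i < φ j})

def IsUnitDiagonal (x : Module.End R V) : Prop := ∀ i, ∃ r : Rˣ, x (b i) = (r : R) • b i

def IsMonomial (x : Module.End R V) : Prop := ∀ i, ∃ (j : ι) (r : Rˣ), x (b i) = (r : R) • b j

variable {b}

lemma isUnitDiagonal_one : b.IsUnitDiagonal 1 := fun i => ⟨1, by simp⟩

lemma IsUnitDiagonal.mul {x y : Module.End R V} (hx : b.IsUnitDiagonal x)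
    (hy : b.IsUnitDiagonal y) : b.IsUnitDiagonal (x * y) := fun i => by
  obtain ⟨r, hr⟩ := hy i
  obtain ⟨r', hr'⟩ := hx i
  exact ⟨r' * r, by rw [Module.End.mul_apply, hr, map_smul, hr', smul_smul, mul_comm,
    Units.val_mul]⟩

lemma IsUnitDiagonal.inv {x : (Module.End R V)ˣ} (hx : b.IsUnitDiagonal x) :
    b.IsUnitDiagonal ↑x⁻¹ := fun i => by
  obtain ⟨r, hr⟩ := hx i
  have hinv : (↑x⁻¹ : Module.End R V) ((x : Module.End R V) (b i)) = b i := by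
    rw [← Module.End.mul_apply, ← Units.val_mul, inv_mul_cancel, Units.val_one,
      Module.End.one_apply]
  rw [hr, map_smul] at hinv
  refine ⟨r⁻¹, ?_⟩
  conv_rhs => rw [← hinv, smul_smul, ← Units.val_mul, inv_mul_cancel, Units.val_one, one_smul]

lemma IsUnitDiagonal.isMonomial {x : Module.End R V} (hx : b.IsUnitDiagonal x) :
    b.IsMonomial x := fun i => ⟨i, hx i⟩

lemma IsMonomial.mul {x y : Module.End R V} (hx : b.IsMonomial x) (hy : b.IsMonomial y) :
    b.IsMonomial (x * y) := fun i => by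
  obtain ⟨j, r, hr⟩ := hy i
  obtain ⟨k, r', hr'⟩ := hx j
  exact ⟨k, r * r', by rw [Module.End.mul_apply, hr, map_smul, hr', smul_smul, Units.val_mul]⟩

section Unitriangular

variable [Preorder α] {φ : ι → α}

lemma isUnitriangular_one : b.IsUnitriangular φ 1 := fun i => by simp

lemma isUnitriangular_one_add_smul {x : Module.End R V}
    (hx : ∀ i, x (b i) ∈ Submodule.span R (b '' {j | φ i < φ j})) (u : R) :
    b.IsUnitriangular φ (1 + u • x) := fun i => by
  simpa using Submodule.smul_mem _ u (hx i)

lemma IsUnitriangular.apply_mem {x : Module.End R V} (hx : b.IsUnitriangular φ x) {r : α}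
    {v : V} (hv : v ∈ Submodule.span R (b '' {j | r < φ j})) :
    x v ∈ Submodule.span R (b '' {j | r < φ j}) := by
  refine (Submodule.span_le (p := (Submodule.span R (b '' {j | r < φ j})).comap x)).2 ?_ hv
  rintro _ ⟨j, hj, rfl⟩
  have hxj : x (b j) - b j ∈ Submodule.span R (b '' {j | r < φ j}) :=
    Submodule.span_mono (Set.image_mono fun k hk => lt_trans hj hk) (hx j)
  simpa using Submodule.add_mem _ hxj (Submodule.subset_span ⟨j, hj, rfl⟩)

lemma IsUnitriangular.mul {x y : Module.End R V} (hx : b.IsUnitriangular φ x)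
    (hy : b.IsUnitriangular φ y) : b.IsUnitriangular φ (x * y) := fun i => by
  have hsplit : (x * y) (b i) - b i = x (y (b i) - b i) + (x (b i) - b i) := by
    simp only [Module.End.mul_apply, map_sub]; abel
  rw [hsplit]
  exact Submodule.add_mem _ (hx.apply_mem (hy i)) (hx i)

lemma IsUnitriangular.repr_self {x : Module.End R V} (hx : b.IsUnitriangular φ x) (i : ι) :
    b.repr (x (b i)) i = 1 := by
  have hi : b.repr (x (b i) - b i) i = 0 :=
    Finsupp.notMem_support_iff.1 fun hmem => lt_irrefl _ (b.mem_span_image.1 (hx i) hmem)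
  simpa [sub_eq_zero] using hi

lemma IsUnitriangular.eq_one_of_isMonomial {x : Module.End R V} (hx : b.IsUnitriangular φ x)
    (hmon : b.IsMonomial x) : x = 1 := by
  classical
  refine b.ext fun i => ?_
  obtain ⟨j, r, hr⟩ := hmon i
  have hrepr := hx.repr_self i
  rw [hr, map_smul, b.repr_self, Finsupp.smul_apply, Finsupp.single_apply, smul_eq_mul] at hrepr
  by_cases hji : j = i
  · subst hji
    rw [if_pos rfl, mul_one] at hrepr
    rw [hr, hrepr, one_smul, Module.End.one_apply]
  · rw [if_neg hji, mul_zero] at hrepr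
    have : Subsingleton R := subsingleton_of_zero_eq_one hrepr
    have : Subsingleton V := Module.subsingleton R V
    exact Subsingleton.elim _ _

lemma IsUnitriangular.eq_one_of_eq_mul {x y d : Module.End R V} (hx : b.IsUnitriangular φ x)
    (hy : b.IsUnitriangular (OrderDual.toDual ∘ φ) y) (hd : b.IsUnitDiagonal d)
    (hxyd : x = y * d) : x = 1 := by
  refine b.ext fun i => ?_
  obtain ⟨r, hr⟩ := hd i
  have hxi : x (b i) = (r : R) • y (b i) := by rw [hxyd, Module.End.mul_apply, hr, map_smul]
  have hr1 : (r : R) = 1 := by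
    simpa [hy.repr_self i] using (congrArg (b.repr · i) hxi).symm.trans (hx.repr_self i)
  rw [hr1, one_smul] at hxi
  have hzero : x (b i) - b i = 0 := by
    refine b.repr.injective (Finsupp.ext fun j => ?_)
    rw [map_zero, Finsupp.coe_zero, Pi.zero_apply]
    by_contra hj
    have hup := b.mem_span_image.1 (hx i) (Finsupp.mem_support_iff.2 hj)
    rw [hxi] at hj
    have hdown := b.mem_span_image.1 (hy i) (Finsupp.mem_support_iff.2 (by simpa using hj))
    exact lt_asymm hup hdown
  rw [Module.End.one_apply, ← sub_eq_zero, hzero]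

variable {U H : Subgroup (Module.End R V)ˣ}

lemma sup_inf_sup_eq {U' : Subgroup (Module.End R V)ˣ}
    (hU : ∀ g ∈ U, b.IsUnitriangular φ g)
    (hU' : ∀ g ∈ U', b.IsUnitriangular (OrderDual.toDual ∘ φ) g)
    (hH : ∀ g ∈ H, b.IsUnitDiagonal g)
    (hUH : H ≤ Subgroup.normalizer (U : Set (Module.End R V)ˣ))
    (hU'H : H ≤ Subgroup.normalizer (U' : Set (Module.End R V)ˣ)) :
    (U ⊔ H) ⊓ (U' ⊔ H) = H := by
  refine le_antisymm (fun g hg => ?_) (le_inf le_sup_right le_sup_right)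
  obtain ⟨u, hu, x, hx, rfl⟩ := Subgroup.exists_mul_of_mem_sup hUH (Subgroup.mem_inf.1 hg).1
  obtain ⟨u', hu', x', hx', hux⟩ := Subgroup.exists_mul_of_mem_sup hU'H (Subgroup.mem_inf.1 hg).2
  have hu1 : u = 1 := Units.val_eq_one.1 <| (hU u hu).eq_one_of_eq_mul (hU' u' hu')
    ((hH x' hx').mul (hH x hx).inv) <| by
      rw [eq_mul_inv_of_mul_eq hux, Units.val_mul, Units.val_mul, mul_assoc]
  rwa [hu1, one_mul]

lemma sup_inf_eq {N : Subgroup (Module.End R V)ˣ}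
    (hU : ∀ g ∈ U, b.IsUnitriangular φ g) (hH : ∀ g ∈ H, b.IsUnitDiagonal g)
    (hN : ∀ g ∈ N, b.IsMonomial g) (hHN : H ≤ N)
    (hUH : H ≤ Subgroup.normalizer (U : Set (Module.End R V)ˣ)) :
    (U ⊔ H) ⊓ N = H := by
  refine le_antisymm (fun g hg => ?_) (le_inf le_sup_right hHN)
  obtain ⟨u, hu, x, hx, rfl⟩ := Subgroup.exists_mul_of_mem_sup hUH (Subgroup.mem_inf.1 hg).1
  have hmon : b.IsMonomial (u : Module.End R V) := by
    have := (hN _ (Subgroup.mem_inf.1 hg).2).mul (hH x hx).inv.isMonomial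
    rwa [← Units.val_mul, mul_inv_cancel_right] at this
  rwa [Units.val_eq_one.1 ((hU u hu).eq_one_of_isMonomial hmon), one_mul]

end Unitriangular

end Module.Basis

namespace RootSystemCtx

variable {E I : Type} [AddCommGroup E] [Module ℚ E] [Fintype I] (c : RootSystemCtx E I)

lemma pr_add_left (x y a : E) : pr c.B (x + y) a = pr c.B x a + pr c.B y a := by
  simp only [pr, map_add, LinearMap.add_apply]
  ring

lemma pr_self {a : E} (ha : a ∈ c.Φ) : pr c.B a a = 2 := by
  rw [← coform_apply, coform_self c ha]

lemma pr_add_α (μ : E) (i : I) : pr c.B (μ + c.α i) (c.α i) = pr c.B μ (c.α i) + 2 := by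
  rw [c.pr_add_left, c.pr_self (c.α_mem i)]

lemma pr_sub_α (μ : E) (i : I) : pr c.B (μ - c.α i) (c.α i) = pr c.B μ (c.α i) - 2 := by
  linarith [sub_add_cancel μ (c.α i) ▸ c.pr_add_α (μ - c.α i) i]

lemma neg_mem {a : E} (ha : a ∈ c.Φ) : -a ∈ c.Φ := by
  simpa [c.pr_self ha, two_smul] using c.reflect_mem a ha a ha

lemma mem_of_isPos_neg {γ : E} (hγ : c.IsPos (-γ)) : γ ∈ c.Φ :=
  neg_neg γ ▸ c.neg_mem hγ.1

lemma s_s_apply (i : I) (v : E) : c.s i (c.s i v) = v :=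
  Module.involutive_reflection (c.coform_self (c.α_mem i)) v

lemma B_s_apply (i : I) (x y : E) : c.B (c.s i x) (c.s i y) = c.B x y := by
  have hB : c.B (c.α i) (c.α i) ≠ 0 :=
    (c.Bpos _ fun h => c.zero_nmem (h ▸ c.α_mem i)).ne'
  simp only [s_apply, pr, map_sub, map_smul, LinearMap.sub_apply, LinearMap.smul_apply,
    smul_eq_mul, c.Bsymm (c.α i) y]
  field_simp
  ring

lemma B_weyl_apply {w : E ≃ₗ[ℚ] E} (hw : w ∈ c.Weyl) (x y : E) : c.B (w x) (w y) = c.B x y := by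
  induction hw using Subgroup.closure_induction generalizing x y with
  | mem g hg => obtain ⟨i, rfl⟩ := hg; exact c.B_s_apply i x y
  | one => rfl
  | mul g g' _ _ ihg ihg' => exact (ihg _ _).trans (ihg' x y)
  | inv g _ ihg =>
      rw [← ihg, ← LinearEquiv.mul_apply, ← LinearEquiv.mul_apply, mul_inv_cancel]
      rfl

lemma weyl_apply_mem {w : E ≃ₗ[ℚ] E} (hw : w ∈ c.Weyl) {a : E} (ha : a ∈ c.Φ) : w a ∈ c.Φ := by
  have hs : ∀ i, ∀ a ∈ c.Φ, c.s i a ∈ c.Φ := fun i a ha => by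
    rw [s_apply]; exact c.reflect_mem _ (c.α_mem i) a ha
  induction hw using Subgroup.closure_induction'' generalizing a with
  | mem g hg => obtain ⟨i, rfl⟩ := hg; exact hs i a ha
  | inv_mem g hg =>
      obtain ⟨i, rfl⟩ := hg
      have hinv : (c.s i)⁻¹ a = c.s i a :=
        (c.s_s_apply i _).symm.trans (congrArg (c.s i) ((c.s i).apply_symm_apply a))
      exact hinv ▸ hs i a ha
  | one => exact ha
  | mul g g' _ _ ihg ihg' => exact ihg (ihg' ha)

lemma pr_weyl {w : E ≃ₗ[ℚ] E} (hw : w ∈ c.Weyl) (x y : E) : pr c.B (w x) (w y) = pr c.B x y := by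
  simp only [pr, c.B_weyl_apply hw]

/-- The height `∑ᵢ cᵢ` of `∑ᵢ cᵢ αᵢ`. -/
def height : E →ₗ[ℚ] ℚ :=
  ∑ i, (Module.Basis.mk c.α_indep c.α_span.ge).coord i

lemma height_α (i : I) : c.height (c.α i) = 1 := by
  classical
  have hb : Module.Basis.mk c.α_indep c.α_span.ge i = c.α i := Module.Basis.mk_apply ..
  simp only [height, LinearMap.sum_apply, ← hb, Module.Basis.coord_apply,
    Module.Basis.repr_self, Finsupp.single_apply, Finset.sum_ite_eq, Finset.mem_univ, if_true]

lemma height_pos_of_isPos {γ : E} (hγ : c.IsPos γ) : 0 < c.height γ := by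
  obtain ⟨hΦ, cf, hcf, rfl⟩ := hγ
  have hsum : c.height (∑ i, cf i • c.α i) = ∑ i, cf i := by simp [height_α]
  rw [hsum]
  refine (Finset.sum_nonneg fun i _ => hcf i).lt_of_ne fun h0 => c.zero_nmem ?_
  have hzero := (Finset.sum_eq_zero_iff_of_nonneg fun i _ => hcf i).1 h0.symm
  simpa [hzero] using hΦ

end RootSystemCtx

namespace PsiData

variable {E I : Type} [AddCommGroup E] [Module ℚ E] [Fintype I] {c : RootSystemCtx E I}
  (P : PsiData c)

lemma pr_trichotomy {μ : E} (hμ : μ ∈ P.Ψ) {a : E} (ha : a ∈ c.Φ) :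
    pr c.B μ a = 0 ∨ pr c.B μ a = 1 ∨ pr c.B μ a = -1 := by
  obtain ⟨lam, hlam, w, hw, rfl⟩ := P.orbit μ hμ
  rw [← w.apply_symm_apply a, c.pr_weyl hw]
  exact hlam.2.2.2 _ (c.weyl_apply_mem (inv_mem hw) ha)

lemma exists_int_pr {μ : E} (hμ : μ ∈ P.Ψ) {a : E} (ha : a ∈ c.Φ) :
    ∃ n : ℤ, (n : ℚ) = pr c.B μ a := by
  rcases P.pr_trichotomy hμ ha with h | h | h
  exacts [⟨0, by simp [h]⟩, ⟨1, by simp [h]⟩, ⟨-1, by simp [h]⟩]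

lemma add_α_mem {μ : E} (hμ : μ ∈ P.Ψ) {i : I} (h : pr c.B μ (c.α i) = -1) :
    μ + c.α i ∈ P.Ψ := by
  simpa [c.s_apply, h] using P.stab μ hμ (c.s i) (Subgroup.subset_closure ⟨i, rfl⟩)

lemma sub_α_mem {μ : E} (hμ : μ ∈ P.Ψ) {i : I} (h : pr c.B μ (c.α i) = 1) :
    μ - c.α i ∈ P.Ψ := by
  simpa [c.s_apply, h] using P.stab μ hμ (c.s i) (Subgroup.subset_closure ⟨i, rfl⟩)

lemma add_two_smul_not_mem {μ : E} (hμ : μ ∈ P.Ψ) {γ : E} (hγ : γ ∈ c.Φ) :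
    μ + (2 : ℚ) • γ ∉ P.Ψ := by
  intro h
  have hpr : pr c.B (μ + (2 : ℚ) • γ) γ = pr c.B μ γ + 4 := by
    rw [c.pr_add_left, two_smul, c.pr_add_left, c.pr_self hγ]; norm_num
  rcases P.pr_trichotomy h hγ with h' | h' | h' <;>
    rcases P.pr_trichotomy hμ hγ with h'' | h'' | h'' <;> linarith

end PsiData

section MinusculeAction

variable {E I : Type} [AddCommGroup E] [Module ℚ E] [Fintype I] {c : RootSystemCtx E I}

structure IsMinusculeAction {K V : Type} [CommRing K] [AddCommGroup V] [Module K V]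
    (P : PsiData c) (b : Module.Basis P.Ψ K V) (e f : I → Module.End K V) : Prop where
  e_apply_of_pr_eq_neg_one : ∀ (i : I) (μ : P.Ψ) (hm : (μ : E) + c.α i ∈ P.Ψ),
      pr c.B (μ : E) (c.α i) = -1 → e i (b μ) = b ⟨(μ : E) + c.α i, hm⟩
  e_apply_of_pr_ne_neg_one : ∀ (i : I) (μ : P.Ψ), pr c.B (μ : E) (c.α i) ≠ -1 → e i (b μ) = 0
  f_apply_of_pr_eq_one : ∀ (i : I) (μ : P.Ψ) (hm : (μ : E) - c.α i ∈ P.Ψ),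
      pr c.B (μ : E) (c.α i) = 1 → f i (b μ) = b ⟨(μ : E) - c.α i, hm⟩
  f_apply_of_pr_ne_one : ∀ (i : I) (μ : P.Ψ), pr c.B (μ : E) (c.α i) ≠ 1 → f i (b μ) = 0

namespace IsMinusculeAction

section General

variable {K V : Type} [CommRing K] [AddCommGroup V] [Module K V] {P : PsiData c}
  {b : Module.Basis P.Ψ K V} {e f : I → Module.End K V}

lemma e_mul_self (h : IsMinusculeAction P b e f) (i : I) : e i * e i = 0 := by
  refine b.ext fun μ => ?_
  rw [Module.End.mul_apply, LinearMap.zero_apply]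
  by_cases hμ : pr c.B (μ : E) (c.α i) = -1
  · rw [h.e_apply_of_pr_eq_neg_one i μ (P.add_α_mem μ.2 hμ) hμ]
    exact h.e_apply_of_pr_ne_neg_one i _ (by rw [c.pr_add_α, hμ]; norm_num)
  · rw [h.e_apply_of_pr_ne_neg_one i μ hμ, map_zero]

lemma f_mul_self (h : IsMinusculeAction P b e f) (i : I) : f i * f i = 0 := by
  refine b.ext fun μ => ?_
  rw [Module.End.mul_apply, LinearMap.zero_apply]
  by_cases hμ : pr c.B (μ : E) (c.α i) = 1
  · rw [h.f_apply_of_pr_eq_one i μ (P.sub_α_mem μ.2 hμ) hμ]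
    exact h.f_apply_of_pr_ne_one i _ (by rw [c.pr_sub_α, hμ]; norm_num)
  · rw [h.f_apply_of_pr_ne_one i μ hμ, map_zero]

lemma nOp_mul_nOp_neg (h : IsMinusculeAction P b e f) (i : I) (t s : K) :
    nOp e f i t s * nOp e f i (-t) (-s) = 1 :=
  nOp_mul_nOp_neg_of_mul_self_eq_zero (h.e_mul_self i) (h.f_mul_self i) t s

lemma nOp_apply_of_pr_eq_zero (h : IsMinusculeAction P b e f) (i : I) (t s : K) {μ : P.Ψ}
    (hμ : pr c.B (μ : E) (c.α i) = 0) : nOp e f i t s (b μ) = b μ := by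
  have he := h.e_apply_of_pr_ne_neg_one i μ (by rw [hμ]; norm_num)
  have hf := h.f_apply_of_pr_ne_one i μ (by rw [hμ]; norm_num)
  simp [nOp, he, hf]

lemma nOp_apply_of_pr_eq_neg_one (h : IsMinusculeAction P b e f) (i : I) {t s : K}
    (hts : t * s = 1) {μ : P.Ψ} (hμ : pr c.B (μ : E) (c.α i) = -1) :
    nOp e f i t s (b μ) = t • b ⟨(μ : E) + c.α i, P.add_α_mem μ.2 hμ⟩ := by
  set ν : P.Ψ := ⟨(μ : E) + c.α i, P.add_α_mem μ.2 hμ⟩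
  have hν : pr c.B (ν : E) (c.α i) = 1 := by simp only [ν, c.pr_add_α, hμ]; norm_num
  have heμ : e i (b μ) = b ν := h.e_apply_of_pr_eq_neg_one i μ _ hμ
  have hfμ : f i (b μ) = 0 := h.f_apply_of_pr_ne_one i μ (by rw [hμ]; norm_num)
  have heν : e i (b ν) = 0 := h.e_apply_of_pr_ne_neg_one i ν (by rw [hν]; norm_num)
  have hfν : f i (b ν) = b μ := by
    rw [h.f_apply_of_pr_eq_one i ν (by simp [ν]) hν]
    exact congrArg b (Subtype.ext (add_sub_cancel_right _ _))
  simp only [nOp, Module.End.mul_apply, LinearMap.add_apply, LinearMap.sub_apply,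
    LinearMap.smul_apply, Module.End.one_apply, map_add, map_sub, map_smul, heμ, hfμ, heν, hfν,
    smul_zero, sub_zero, add_zero]
  match_scalars <;> grind

lemma nOp_apply_of_pr_eq_one (h : IsMinusculeAction P b e f) (i : I) {t s : K}
    (hts : t * s = 1) {μ : P.Ψ} (hμ : pr c.B (μ : E) (c.α i) = 1) :
    nOp e f i t s (b μ) = (-s) • b ⟨(μ : E) - c.α i, P.sub_α_mem μ.2 hμ⟩ := by
  set ν : P.Ψ := ⟨(μ : E) - c.α i, P.sub_α_mem μ.2 hμ⟩
  have hν : pr c.B (ν : E) (c.α i) = -1 := by simp only [ν, c.pr_sub_α, hμ]; norm_num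
  have hfμ : f i (b μ) = b ν := h.f_apply_of_pr_eq_one i μ _ hμ
  have heμ : e i (b μ) = 0 := h.e_apply_of_pr_ne_neg_one i μ (by rw [hμ]; norm_num)
  have heν : e i (b ν) = b μ := by
    rw [h.e_apply_of_pr_eq_neg_one i ν (by simp [ν]) hν]
    exact congrArg b (Subtype.ext (sub_add_cancel _ _))
  simp only [nOp, Module.End.mul_apply, LinearMap.add_apply, LinearMap.sub_apply,
    LinearMap.smul_apply, Module.End.one_apply, map_sub, map_smul, heμ, hfμ, heν, smul_zero,
    add_zero]
  match_scalars <;> grind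

lemma hOp_apply (h : IsMinusculeAction P b e f) (i : I) (t : Kˣ) {μ : P.Ψ} {n : ℤ}
    (hn : (n : ℚ) = pr c.B (μ : E) (c.α i)) : hOp e f i t (b μ) = ((t ^ n : Kˣ) : K) • b μ := by
  have ht : (t : K) * ((t⁻¹ : Kˣ) : K) = 1 := t.mul_inv
  have hm : ((-1 : Kˣ) : K) * (((-1 : Kˣ)⁻¹ : Kˣ) : K) = 1 := (-1 : Kˣ).mul_inv
  have hm' : (((-1 : Kˣ)⁻¹ : Kˣ) : K) = -1 := by simp
  rw [hOp, Module.End.mul_apply]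
  rcases P.pr_trichotomy μ.2 (c.α_mem i) with hμ | hμ | hμ <;> rw [hμ] at hn
  · obtain rfl : n = 0 := by exact_mod_cast hn
    rw [h.nOp_apply_of_pr_eq_zero i _ _ hμ, h.nOp_apply_of_pr_eq_zero i _ _ hμ]
    simp
  · obtain rfl : n = 1 := by exact_mod_cast hn
    have hν : pr c.B ((μ : E) - c.α i) (c.α i) = -1 := by rw [c.pr_sub_α, hμ]; norm_num
    rw [h.nOp_apply_of_pr_eq_one i hm hμ, map_smul, h.nOp_apply_of_pr_eq_neg_one i ht hν, hm']
    simp only [sub_add_cancel, neg_neg, one_smul, zpow_one]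
  · obtain rfl : n = -1 := by exact_mod_cast hn
    have hν : pr c.B ((μ : E) + c.α i) (c.α i) = 1 := by rw [c.pr_add_α, hμ]; norm_num
    rw [h.nOp_apply_of_pr_eq_neg_one i hm hμ, map_smul, h.nOp_apply_of_pr_eq_one i ht hν]
    simp [smul_smul]

lemma mapsWeights_e (h : IsMinusculeAction P b e f) (i : I) :
    MapsWeights b Subtype.val (· + c.α i) (e i) := by
  refine mapsWeights_of_basis fun μ => ?_
  by_cases hμ : pr c.B (μ : E) (c.α i) = -1
  · rw [h.e_apply_of_pr_eq_neg_one i μ (P.add_α_mem μ.2 hμ) hμ]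
    exact basis_mem_weightSpace_val _
  · rw [h.e_apply_of_pr_ne_neg_one i μ hμ]
    exact Submodule.zero_mem _

lemma mapsWeights_nOp (h : IsMinusculeAction P b e f) (i : I) {t s : K} (hts : t * s = 1) :
    MapsWeights b Subtype.val (c.s i) (nOp e f i t s) := by
  refine mapsWeights_of_basis fun μ => ?_
  rcases P.pr_trichotomy μ.2 (c.α_mem i) with hμ | hμ | hμ
  · rw [h.nOp_apply_of_pr_eq_zero i t s hμ, c.s_apply, hμ, zero_smul, sub_zero]
    exact basis_mem_weightSpace_val μ.2
  · rw [h.nOp_apply_of_pr_eq_one i hts hμ, c.s_apply, hμ, one_smul]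
    exact Submodule.smul_mem _ _ (basis_mem_weightSpace_val _)
  · rw [h.nOp_apply_of_pr_eq_neg_one i hts hμ, c.s_apply, hμ, neg_one_smul, sub_neg_eq_add]
    exact Submodule.smul_mem _ _ (basis_mem_weightSpace_val _)

end General

section Complex

variable {P : PsiData c} {M : Type} [AddCommGroup M] [Module ℂ M] {z : Module.Basis P.Ψ ℂ M}
  {e f : I → Module.End ℂ M}

lemma mapsWeights_conjOp (h : IsMinusculeAction P z e f) {nu : I → (Module.End ℂ M)ˣ}
    (hnu : ∀ i, (nu i : Module.End ℂ M) = nOp e f i 1 1) {x : Module.End ℂ M} {β : E}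
    (hx : MapsWeights z Subtype.val (· + β) x) (l : List I) :
    MapsWeights z Subtype.val (· + (l.map c.s).prod β) (conjOp nu x l) := by
  induction l with
  | nil => simpa [conjOp] using hx
  | cons i l ih =>
      have hinv : (((nu i)⁻¹ : (Module.End ℂ M)ˣ) : Module.End ℂ M) = nOp e f i (-1) (-1) :=
        Units.inv_eq_of_mul_eq_one_right (by rw [hnu]; exact h.nOp_mul_nOp_neg i 1 1)
      have hconj : conjOp nu x (i :: l) = nu i * conjOp nu x l * ↑(nu i)⁻¹ := by
        simp only [conjOp, List.map_cons, List.prod_cons, mul_inv_rev, Units.val_mul, mul_assoc]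
      have hσ : (c.s i ∘ (· + (l.map c.s).prod β)) ∘ c.s i = (· + ((i :: l).map c.s).prod β) := by
        funext ω
        simp [c.s_s_apply]
      rw [hconj, ← hσ, hinv, hnu i]
      exact ((h.mapsWeights_nOp i (one_mul 1)).mul ih).mul (h.mapsWeights_nOp i (by norm_num))

lemma mapsWeights_eRoot (h : IsMinusculeAction P z e f) {nu : I → (Module.End ℂ M)ˣ}
    (hnu : ∀ i, (nu i : Module.End ℂ M) = nOp e f i 1 1) {eRoot : E → Module.End ℂ M}
    (heRoot : ∀ γ ∈ c.Φ, ∃ (i : I) (l : List I),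
      ((l.map c.s).prod) (c.α i) = γ ∧ eRoot γ = conjOp nu (e i) l)
    {γ : E} (hγ : γ ∈ c.Φ) : MapsWeights z Subtype.val (· + γ) (eRoot γ) := by
  obtain ⟨i, l, rfl, hγ⟩ := heRoot γ hγ
  exact hγ ▸ h.mapsWeights_conjOp hnu (h.mapsWeights_e i) l

end Complex

end IsMinusculeAction

section RootElements

variable {P : PsiData c} {R Mb : Type} [CommRing R] [AddCommGroup Mb] [Module R Mb]
  {zb : Module.Basis P.Ψ R Mb}

lemma mul_self_eq_zero_of_mapsWeights {γ : E} (hγ : γ ∈ c.Φ) {x : Module.End R Mb}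
    (hx : MapsWeights zb Subtype.val (· + γ) x) : x * x = 0 := by
  refine zb.ext fun μ => ?_
  have hbot : weightSpace zb Subtype.val ((μ : E) + γ + γ) = ⊥ := by
    refine weightSpace_eq_bot fun ν hν => P.add_two_smul_not_mem μ.2 hγ ?_
    rw [two_smul, ← add_assoc, ← hν]
    exact ν.2
  simpa [hbot] using (hx.mul hx).apply_basis μ

/-- `Uplus c eb` and `Uminus c eb` are `rootElemClosure eb p` for `p = c.IsPos` and
`p = fun γ => c.IsPos (-γ)`, definitionally. -/
def rootElemClosure (eb : E → Module.End R Mb) (p : E → Prop) : Subgroup (Module.End R Mb)ˣ :=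
  Subgroup.closure {g | ∃ γ, p γ ∧ ∃ t : R, (g : Module.End R Mb) = 1 + t • eb γ}

variable {eb : E → Module.End R Mb}

lemma isUnitriangular_of_mem_rootElemClosure {α : Type} [Preorder α] {φ : P.Ψ → α}
    (heb : ∀ γ ∈ c.Φ, MapsWeights zb Subtype.val (· + γ) (eb γ)) {p : E → Prop}
    (hp : ∀ γ, p γ → γ ∈ c.Φ) (hφ : ∀ γ, p γ → ∀ μ ν : P.Ψ, (ν : E) = μ + γ → φ μ < φ ν)
    {g : (Module.End R Mb)ˣ} (hg : g ∈ rootElemClosure eb p) : zb.IsUnitriangular φ g := by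
  have hgen : ∀ γ, p γ → ∀ u : R, zb.IsUnitriangular φ (1 + u • eb γ) := fun γ hγ =>
    Module.Basis.isUnitriangular_one_add_smul fun μ =>
      Submodule.span_mono (Set.image_mono fun ν hν => hφ γ hγ μ ν hν)
        ((heb γ (hp γ hγ)).apply_basis μ)
  induction hg using Subgroup.closure_induction'' with
  | mem x hx =>
      obtain ⟨γ, hγ, u, hu⟩ := hx
      exact hu ▸ hgen γ hγ u
  | inv_mem x hx =>
      obtain ⟨γ, hγ, u, hu⟩ := hx
      have hsq := mul_self_eq_zero_of_mapsWeights (hp γ hγ) (heb γ (hp γ hγ))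
      rw [Units.inv_eq_of_mul_eq_one_right (hu ▸ one_add_smul_mul_one_add_neg_smul hsq u)]
      exact hgen γ hγ (-u)
  | one => exact Module.Basis.isUnitriangular_one
  | mul x y _ _ hx hy => exact Units.val_mul x y ▸ hx.mul hy

lemma isUnitriangular_of_mem_uplus (heb : ∀ γ ∈ c.Φ, MapsWeights zb Subtype.val (· + γ) (eb γ))
    {g : (Module.End R Mb)ˣ} (hg : g ∈ Uplus c eb) :
    zb.IsUnitriangular (c.height ∘ Subtype.val) g :=
  isUnitriangular_of_mem_rootElemClosure heb (fun γ hγ => hγ.1)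
    (fun γ hγ μ ν hν => by simpa [hν] using c.height_pos_of_isPos hγ) hg

lemma isUnitriangular_of_mem_uminus (heb : ∀ γ ∈ c.Φ, MapsWeights zb Subtype.val (· + γ) (eb γ))
    {g : (Module.End R Mb)ˣ} (hg : g ∈ Uminus c eb) :
    zb.IsUnitriangular (OrderDual.toDual ∘ c.height ∘ Subtype.val) g := by
  refine isUnitriangular_of_mem_rootElemClosure heb (fun _ => c.mem_of_isPos_neg)
    (fun γ hγ μ ν hν => ?_) hg
  simp only [Function.comp_apply, OrderDual.toDual_lt_toDual, hν, map_add]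
  linarith [c.height_pos_of_isPos hγ, map_neg c.height γ]

namespace IsMinusculeAction

variable {ebS fbS : I → Module.End R Mb}

lemma hOp_apply_of_mem_weightSpace (h : IsMinusculeAction P zb ebS fbS) (i : I) (t : Rˣ)
    {ω : E} {n : ℤ} (hn : (n : ℚ) = pr c.B ω (c.α i)) {v : Mb}
    (hv : v ∈ weightSpace zb Subtype.val ω) : hOp ebS fbS i t v = ((t ^ n : Rˣ) : R) • v := by
  refine (Module.End.mem_eigenspace_iff (f := hOp ebS fbS i t)).1 ?_
  refine (Submodule.span_le (p := Module.End.eigenspace _ _)).2 ?_ hv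
  rintro _ ⟨μ, rfl, rfl⟩
  exact Module.End.mem_eigenspace_iff.2 (h.hOp_apply i t hn)

lemma hOp_mul_hOp_inv (h : IsMinusculeAction P zb ebS fbS) (i : I) (t : Rˣ) :
    hOp ebS fbS i t * hOp ebS fbS i t⁻¹ = 1 := by
  refine zb.ext fun μ => ?_
  obtain ⟨n, hn⟩ := P.exists_int_pr μ.2 (c.α_mem i)
  rw [Module.End.mul_apply, h.hOp_apply i _ hn, map_smul, h.hOp_apply i _ hn, smul_smul,
    ← Units.val_mul, ← mul_zpow, inv_mul_cancel, one_zpow, Units.val_one, one_smul,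
    Module.End.one_apply]

lemma hOp_mul_one_add_smul (h : IsMinusculeAction P zb ebS fbS) {x : Module.End R Mb} {γ : E}
    (hx : MapsWeights zb Subtype.val (· + γ) x) (i : I) (t : Rˣ) (u : R) {k : ℤ}
    (hk : (k : ℚ) = pr c.B γ (c.α i)) :
    hOp ebS fbS i t * (1 + u • x) = (1 + (u * ((t ^ k : Rˣ) : R)) • x) * hOp ebS fbS i t := by
  refine zb.ext fun μ => ?_
  obtain ⟨n, hn⟩ := P.exists_int_pr μ.2 (c.α_mem i)
  have hnk : ((n + k : ℤ) : ℚ) = pr c.B ((μ : E) + γ) (c.α i) := by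
    rw [c.pr_add_left, ← hn, ← hk, Int.cast_add]
  have hxμ := h.hOp_apply_of_mem_weightSpace i t hnk (hx.apply_basis μ)
  simp only [Module.End.mul_apply, LinearMap.add_apply, LinearMap.smul_apply,
    Module.End.one_apply, map_add, map_smul, hxμ, h.hOp_apply i t hn, smul_smul, zpow_add,
    Units.val_mul]
  module

lemma val_inv_of_val_eq_hOp (h : IsMinusculeAction P zb ebS fbS) {i : I} {t : Rˣ}
    {gh : (Module.End R Mb)ˣ} (hgh : (gh : Module.End R Mb) = hOp ebS fbS i t) :
    ((gh⁻¹ : (Module.End R Mb)ˣ) : Module.End R Mb) = hOp ebS fbS i t⁻¹ :=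
  Units.inv_eq_of_mul_eq_one_right (hgh ▸ h.hOp_mul_hOp_inv i t)

lemma val_conj (h : IsMinusculeAction P zb ebS fbS) {x : Module.End R Mb} {γ : E}
    (hx : MapsWeights zb Subtype.val (· + γ) x) (i : I) (t : Rˣ) (u : R) {k : ℤ}
    (hk : (k : ℚ) = pr c.B γ (c.α i)) {gh gx : (Module.End R Mb)ˣ}
    (hgh : (gh : Module.End R Mb) = hOp ebS fbS i t) (hgx : (gx : Module.End R Mb) = 1 + u • x) :
    ((gh * gx * gh⁻¹ : (Module.End R Mb)ˣ) : Module.End R Mb) =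
      1 + (u * ((t ^ k : Rˣ) : R)) • x := by
  rw [Units.val_mul, Units.val_mul, h.val_inv_of_val_eq_hOp hgh, hgh, hgx,
    h.hOp_mul_one_add_smul hx i t u hk, mul_assoc, h.hOp_mul_hOp_inv, mul_one]

lemma hgroup_le_normalizer (h : IsMinusculeAction P zb ebS fbS)
    (heb : ∀ γ ∈ c.Φ, MapsWeights zb Subtype.val (· + γ) (eb γ)) {p : E → Prop}
    (hp : ∀ γ, p γ → γ ∈ c.Φ) :
    Hgroup ebS fbS ≤ Subgroup.normalizer (rootElemClosure eb p : Set (Module.End R Mb)ˣ) := by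
  refine Subgroup.closure_le_normalizer_closure
    (fun g ⟨i, t, hg⟩ => ⟨i, t⁻¹, h.val_inv_of_val_eq_hOp hg⟩) ?_
  rintro g ⟨i, t, hg⟩ v ⟨γ, hγ, u, hv⟩
  obtain ⟨k, hk⟩ := c.crystal _ (c.α_mem i) γ (hp γ hγ)
  exact ⟨γ, hγ, u * ((t ^ k : Rˣ) : R), h.val_conj (heb γ (hp γ hγ)) i t u hk.symm hg hv⟩

lemma isUnitDiagonal_of_mem_hgroup (h : IsMinusculeAction P zb ebS fbS)
    {g : (Module.End R Mb)ˣ} (hg : g ∈ Hgroup ebS fbS) : zb.IsUnitDiagonal g := by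
  induction hg using Subgroup.closure_induction with
  | mem x hx =>
      obtain ⟨i, t, hx⟩ := hx
      intro μ
      obtain ⟨n, hn⟩ := P.exists_int_pr μ.2 (c.α_mem i)
      exact ⟨t ^ n, by rw [hx, h.hOp_apply i t hn]⟩
  | one => exact Module.Basis.isUnitDiagonal_one
  | mul x y _ _ hx hy => exact Units.val_mul x y ▸ hx.mul hy
  | inv x _ hx => exact hx.inv

lemma isMonomial_nOp (h : IsMinusculeAction P zb ebS fbS) (i : I) (t : Rˣ) :
    zb.IsMonomial (nOp ebS fbS i t ↑t⁻¹) := by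
  intro μ
  rcases P.pr_trichotomy μ.2 (c.α_mem i) with hμ | hμ | hμ
  · exact ⟨μ, 1, by rw [h.nOp_apply_of_pr_eq_zero i _ _ hμ, Units.val_one, one_smul]⟩
  · exact ⟨_, -t⁻¹, by rw [h.nOp_apply_of_pr_eq_one i t.mul_inv hμ, Units.val_neg]⟩
  · exact ⟨_, t, h.nOp_apply_of_pr_eq_neg_one i t.mul_inv hμ⟩

lemma isMonomial_of_mem_ngroup (h : IsMinusculeAction P zb ebS fbS)
    {g : (Module.End R Mb)ˣ} (hg : g ∈ Ngroup ebS fbS) : zb.IsMonomial g := by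
  induction hg using Subgroup.closure_induction'' with
  | mem x hx =>
      obtain ⟨i, t, hx⟩ := hx
      exact hx ▸ h.isMonomial_nOp i t
  | inv_mem x hx =>
      obtain ⟨i, t, hx⟩ := hx
      rw [Units.inv_eq_of_mul_eq_one_right (hx ▸ h.nOp_mul_nOp_neg i _ _)]
      simpa using h.isMonomial_nOp i (-t)
  | one => exact Module.Basis.isUnitDiagonal_one.isMonomial
  | mul x y _ _ hx hy => exact Units.val_mul x y ▸ hx.mul hy

lemma hgroup_le_ngroup (h : IsMinusculeAction P zb ebS fbS) :
    Hgroup ebS fbS ≤ Ngroup ebS fbS := by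
  have hn : ∀ (i : I) (t : Rˣ), ∃ g ∈ Ngroup ebS fbS,
      (g : Module.End R Mb) = nOp ebS fbS i t ↑t⁻¹ := fun i t =>
    ⟨⟨_, _, h.nOp_mul_nOp_neg i _ _, by simpa using h.nOp_mul_nOp_neg i (-t) (-↑t⁻¹)⟩,
      Subgroup.subset_closure ⟨i, t, rfl⟩, rfl⟩
  refine (Subgroup.closure_le _).2 ?_
  rintro g ⟨i, t, hg⟩
  obtain ⟨g₁, hg₁, h₁⟩ := hn i t
  obtain ⟨g₂, hg₂, h₂⟩ := hn i (-1)
  have : g = g₁ * g₂ := Units.ext (by rw [hg, Units.val_mul, h₁, h₂, hOp])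
  exact this ▸ mul_mem hg₁ hg₂

end IsMinusculeAction

end RootElements

end MinusculeAction

/-- Lemma 4.6: hᵢ(t) x_a(u) hᵢ(t)⁻¹ = x_a(u t^{(a,αᵢ^∨)}); hence H normalises U^±,
B^± = U^±·H are subgroups, and B⁺ ∩ B⁻ = H = B^± ∩ N. -/
theorem stmt_17 {E I : Type} [AddCommGroup E] [Module ℚ E] [Fintype I]
    (c : RootSystemCtx E I) (P : PsiData c)
    (M : Type) [AddCommGroup M] [Module ℂ M] (z : Module.Basis P.Ψ ℂ M)
    (e f : I → Module.End ℂ M)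
    (he1 : ∀ (i : I) (μ : P.Ψ) (hm : (μ : E) + c.α i ∈ P.Ψ),
      pr c.B (μ : E) (c.α i) = -1 → e i (z μ) = z ⟨(μ : E) + c.α i, hm⟩)
    (he0 : ∀ (i : I) (μ : P.Ψ), pr c.B (μ : E) (c.α i) ≠ -1 → e i (z μ) = 0)
    (hf1 : ∀ (i : I) (μ : P.Ψ) (hm : (μ : E) - c.α i ∈ P.Ψ),
      pr c.B (μ : E) (c.α i) = 1 → f i (z μ) = z ⟨(μ : E) - c.α i, hm⟩)
    (hf0 : ∀ (i : I) (μ : P.Ψ), pr c.B (μ : E) (c.α i) ≠ 1 → f i (z μ) = 0)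
    (nu : I → (Module.End ℂ M)ˣ)
    (hnu : ∀ i : I, (nu i : Module.End ℂ M) = nOp e f i 1 1)
    (eRoot : E → Module.End ℂ M)
    (heRoot : ∀ γ ∈ c.Φ, ∃ (i : I) (l : List I),
      ((l.map c.s).prod) (c.α i) = γ ∧ eRoot γ = conjOp nu (e i) l)
    (R : Type) [CommRing R] (Mb : Type) [AddCommGroup Mb] [Module R Mb]
    (zb : Module.Basis P.Ψ R Mb) (ebS fbS : I → Module.End R Mb)
    (hebS1 : ∀ (i : I) (μ : P.Ψ) (hm : (μ : E) + c.α i ∈ P.Ψ),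
      pr c.B (μ : E) (c.α i) = -1 → ebS i (zb μ) = zb ⟨(μ : E) + c.α i, hm⟩)
    (hebS0 : ∀ (i : I) (μ : P.Ψ), pr c.B (μ : E) (c.α i) ≠ -1 → ebS i (zb μ) = 0)
    (hfbS1 : ∀ (i : I) (μ : P.Ψ) (hm : (μ : E) - c.α i ∈ P.Ψ),
      pr c.B (μ : E) (c.α i) = 1 → fbS i (zb μ) = zb ⟨(μ : E) - c.α i, hm⟩)
    (hfbS0 : ∀ (i : I) (μ : P.Ψ), pr c.B (μ : E) (c.α i) ≠ 1 → fbS i (zb μ) = 0)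
    (eb : E → Module.End R Mb)
    (hlink : ∀ γ ∈ c.Φ, ∀ μ ν : P.Ψ, ∃ k : ℤ,
      z.repr (eRoot γ (z μ)) ν = (k : ℂ) ∧ zb.repr (eb γ (zb μ)) ν = (k : R))
    :
    (∀ (i : I) (a : E), a ∈ c.Φ → ∀ (u : R) (t : Rˣ) (k : ℤ),
      (k : ℚ) = pr c.B a (c.α i) →
      ∀ gh gx gx' : (Module.End R Mb)ˣ,
        (gh : Module.End R Mb) = hOp ebS fbS i t →
        (gx : Module.End R Mb) = 1 + u • eb a →
        (gx' : Module.End R Mb) = 1 + (u * ((t ^ k : Rˣ) : R)) • eb a →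
        gh * gx * gh⁻¹ = gx') ∧
    (∀ g ∈ Hgroup ebS fbS, ∀ v ∈ Uplus c eb, g * v * g⁻¹ ∈ Uplus c eb) ∧
    (∀ g ∈ Hgroup ebS fbS, ∀ v ∈ Uminus c eb, g * v * g⁻¹ ∈ Uminus c eb) ∧
    (∀ g ∈ Uplus c eb ⊔ Hgroup ebS fbS,
      ∃ v ∈ Uplus c eb, ∃ x ∈ Hgroup ebS fbS, g = v * x) ∧
    (∀ g ∈ Uminus c eb ⊔ Hgroup ebS fbS,
      ∃ v ∈ Uminus c eb, ∃ x ∈ Hgroup ebS fbS, g = v * x) ∧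
    (Uplus c eb ⊔ Hgroup ebS fbS) ⊓ (Uminus c eb ⊔ Hgroup ebS fbS) = Hgroup ebS fbS ∧
    (Uplus c eb ⊔ Hgroup ebS fbS) ⊓ Ngroup ebS fbS = Hgroup ebS fbS ∧
    (Uminus c eb ⊔ Hgroup ebS fbS) ⊓ Ngroup ebS fbS = Hgroup ebS fbS := by
  have hR : IsMinusculeAction P zb ebS fbS := ⟨hebS1, hebS0, hfbS1, hfbS0⟩
  have hC : IsMinusculeAction P z e f := ⟨he1, he0, hf1, hf0⟩
  have heb : ∀ γ ∈ c.Φ, MapsWeights zb Subtype.val (· + γ) (eb γ) := fun γ hγ =>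
    mapsWeights_of_repr_eq_intCast (hC.mapsWeights_eRoot hnu heRoot hγ) (hlink γ hγ)
  have hUp := fun g => isUnitriangular_of_mem_uplus heb (g := g)
  have hUm := fun g => isUnitriangular_of_mem_uminus heb (g := g)
  have hHUp := hR.hgroup_le_normalizer heb (p := c.IsPos) fun γ hγ => hγ.1
  have hHUm := hR.hgroup_le_normalizer heb (p := fun γ => c.IsPos (-γ))
    fun _ => c.mem_of_isPos_neg
  have hH := fun g => hR.isUnitDiagonal_of_mem_hgroup (g := g)
  have hN := fun g => hR.isMonomial_of_mem_ngroup (g := g)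
  refine ⟨fun i a ha u t k hk gh gx gx' hgh hgx hgx' =>
      Units.ext ((hR.val_conj (heb a ha) i t u hk hgh hgx).trans hgx'.symm),
    fun g hg v hv => (Subgroup.mem_normalizer_iff.1 (hHUp hg) v).1 hv,
    fun g hg v hv => (Subgroup.mem_normalizer_iff.1 (hHUm hg) v).1 hv,
    fun g hg => Subgroup.exists_mul_of_mem_sup hHUp hg,
    fun g hg => Subgroup.exists_mul_of_mem_sup hHUm hg,
    Module.Basis.sup_inf_sup_eq hUp hUm hH hHUp hHUm,
    Module.Basis.sup_inf_eq hUp hH hN hR.hgroup_le_ngroup hHUp,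
    Module.Basis.sup_inf_eq hUm hH hN hR.hgroup_le_ngroup hHUm⟩
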